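/- Let p be an odd prime, q a power of p, and (a,b) a valid pair in F_q^2 with a a nonzero square. Let φ = φ[a,b] and α(j) = φ(φ^{-1}(j)-1) + 1. Suppose y ∈ F_q is such that y - ja + j and y - (j+1)a + j are nonzero squares for all j ∈ {0, 1, ..., p-1}. Then α^k(y) = y - ka + k for all k ∈ {0,...,p}, so in particular α^p(y) = y and α has a cycle of length dividing p containing y; if additionally a ≠ 1 this cycle has length exactly p. -/

import Mathlib

open Classical in
/-- The quadratic orthomorphism map: `0 ↦ 0`, `x ↦ a*x` if `x` is a (nonzero)
square, `x ↦ b*x` otherwise. -/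
noncomputable def phi {F : Type*} [Field F] (a b : F) (x : F) : F :=
  if x = 0 then 0 else if IsSquare x then a * x else b * x

/-- The row permutation `r_{0,1}` of the quadratic Latin square `L[a,b]`:
`α(j) = φ(φ⁻¹(j) - 1) + 1`. -/
noncomputable def alphaP {F : Type*} [Field F] (a b : F) (j : F) : F :=
  phi a b (Function.invFun (phi a b) j - 1) + 1

lemma sq_of_mul_sq {F : Type*} [Field F] {x y : F} (hx : IsSquare x) (hx0 : x ≠ 0)
    (hxy : IsSquare (x * y)) : IsSquare y := by
  have h : y = x⁻¹ * (x * y) := by field_simp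
  rw [h]
  exact hx.inv.mul hxy

lemma phi_inj {F : Type*} [Field F] {a b : F} (hab0 : a * b ≠ 0) (habs : IsSquare (a * b)) :
    Function.Injective (phi a b) := by
  have ha0 : a ≠ 0 := left_ne_zero_of_mul hab0
  have hb0 : b ≠ 0 := right_ne_zero_of_mul hab0
  intro x y h
  unfold phi at h
  by_cases hx : x = 0 <;> by_cases hy : y = 0
  · rw [hx, hy]
  · exfalso
    rw [if_pos hx, if_neg hy] at h
    split_ifs at h with hs
    · exact mul_ne_zero ha0 hy h.symm
    · exact mul_ne_zero hb0 hy h.symm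
  · exfalso
    rw [if_neg hx, if_pos hy] at h
    split_ifs at h with hs
    · exact mul_ne_zero ha0 hx h
    · exact mul_ne_zero hb0 hx h
  · rw [if_neg hx, if_neg hy] at h
    by_cases hsx : IsSquare x <;> by_cases hsy : IsSquare y
    · rw [if_pos hsx, if_pos hsy] at h; exact mul_left_cancel₀ ha0 h
    · rw [if_pos hsx, if_neg hsy] at h
      exfalso
      apply hsy
      have hxy : IsSquare (x * y) := by
        have hkey : x * y = (a * b)⁻¹ * (a * x) ^ 2 := by
          field_simp
          linear_combination -h
        rw [hkey]
        exact habs.inv.mul ⟨a * x, by ring⟩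
      exact sq_of_mul_sq hsx hx hxy
    · rw [if_neg hsx, if_pos hsy] at h
      exfalso
      apply hsx
      have hxy : IsSquare (y * x) := by
        have hkey : y * x = (a * b)⁻¹ * (a * y) ^ 2 := by
          field_simp
          linear_combination h
        rw [hkey]
        exact habs.inv.mul ⟨a * y, by ring⟩
      exact sq_of_mul_sq hsy hy hxy
    · rw [if_neg hsx, if_neg hsy] at h; exact mul_left_cancel₀ hb0 h

lemma alpha_step {F : Type*} [Field F] {a b : F} (hab0 : a * b ≠ 0) (habs : IsSquare (a * b))
    (ha : IsSquare a) (z : F)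
    (h1 : z ≠ 0) (h1s : IsSquare z)
    (h2 : z - a ≠ 0) (h2s : IsSquare (z - a)) :
    alphaP a b z = z - a + 1 := by
  have ha0 : a ≠ 0 := left_ne_zero_of_mul hab0
  have hz : phi a b (a⁻¹ * z) = z := by
    unfold phi
    have hne : a⁻¹ * z ≠ 0 := mul_ne_zero (inv_ne_zero ha0) h1
    rw [if_neg hne, if_pos (ha.inv.mul h1s)]
    field_simp
  have hinv : Function.invFun (phi a b) z = a⁻¹ * z := by
    apply phi_inj hab0 habs
    rw [Function.invFun_eq ⟨_, hz⟩, hz]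
  unfold alphaP
  rw [hinv]
  have he : a⁻¹ * z - 1 = a⁻¹ * (z - a) := by field_simp
  rw [he]
  unfold phi
  have hne : a⁻¹ * (z - a) ≠ 0 := mul_ne_zero (inv_ne_zero ha0) h2
  rw [if_neg hne, if_pos (ha.inv.mul h2s)]
  field_simp

/-- Let `F` be a field of odd characteristic `p` and `(a,b)` a valid pair with
`a` a nonzero square.  If `y - ja + j` and `y - (j+1)a + j` are nonzero squares
for all `j ∈ {0, …, p-1}`, then `α^k(y) = y - ka + k` for all `k ≤ p`; in
particular `α^p(y) = y`, and if `a ≠ 1` the cycle of `α` containing `y` has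
length exactly `p`. -/
theorem stmt10 {F : Type*} [Field F] [Fintype F]
    (p : ℕ) (hp : p.Prime) (hpodd : Odd p) (hchar : ringChar F = p)
    (a b : F)
    (hab : a * b ≠ 0 ∧ IsSquare (a * b))
    (hab1 : (a - 1) * (b - 1) ≠ 0 ∧ IsSquare ((a - 1) * (b - 1)))
    (ha : IsSquare a)
    (y : F)
    (hy : ∀ j : ℕ, j < p →
      (y - (j : F) * a + (j : F) ≠ 0 ∧ IsSquare (y - (j : F) * a + (j : F))) ∧
      (y - ((j : F) + 1) * a + (j : F) ≠ 0 ∧ IsSquare (y - ((j : F) + 1) * a + (j : F)))) :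
    (∀ k : ℕ, k ≤ p → (alphaP a b)^[k] y = y - (k : F) * a + (k : F)) ∧
    (alphaP a b)^[p] y = y ∧
    (a ≠ 1 → ∀ m : ℕ, 0 < m → m < p → (alphaP a b)^[m] y ≠ y) := by
  haveI : CharP F p := hchar ▸ ringChar.charP F
  have hmain : ∀ k : ℕ, k ≤ p → (alphaP a b)^[k] y = y - (k : F) * a + (k : F) := by
    intro k
    induction k with
    | zero => intro _; simp
    | succ k ih =>
      intro hkp
      have hk : k < p := Nat.lt_of_succ_le hkp
      obtain ⟨⟨hz0, hzs⟩, ⟨hw0, hws⟩⟩ := hy k hk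
      set z := y - (k : F) * a + (k : F) with hzdef
      have hza : z - a = y - ((k : F) + 1) * a + (k : F) := by ring
      rw [Function.iterate_succ_apply', ih (le_of_lt hk),
        alpha_step hab.1 hab.2 ha z hz0 hzs (hza ▸ hw0) (hza ▸ hws)]
      push_cast
      ring
  have hp0 : (p : F) = 0 := CharP.cast_eq_zero F p
  refine ⟨hmain, by rw [hmain p le_rfl, hp0]; ring, ?_⟩
  intro ha1 m hm0 hmp heq
  rw [hmain m (le_of_lt hmp)] at heq
  have hmne : (m : F) ≠ 0 := by
    rw [Ne, CharP.cast_eq_zero_iff F p]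
    exact fun hdvd => absurd (Nat.le_of_dvd hm0 hdvd) (not_le.mpr hmp)
  apply ha1
  have : (m : F) * (a - 1) = 0 := by linear_combination -heq
  rcases mul_eq_zero.mp this with h | h
  · exact absurd h hmne
  · exact sub_eq_zero.mp h
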